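/- arXiv:2502.12776 — 2 statements merged into one kernel-verified Lean document; each statement's English description precedes it below -/
import Mathlib

section
/- Let Y be a finite nonempty set and let π_pt, π_ft, and π̃_pt be strictly positive probability distributions on Y. Define the implicit reward r(y) = log(π_ft(y)/π_pt(y)). Then the unique maximizer over probability distributions π on Y of Σ_y π(y)·r(y) − D_KL(π ‖ π̃_pt) is π(y) = π̃_pt(y)·π_ft(y)/π_pt(y) divided by the normalization Z̃ = Σ_y π̃_pt(y)·π_ft(y)/π_pt(y). -/
open BigOperators

/-- KL divergence of finitely supported distributions, summed over the support of `p`. -/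
noncomputable def KL {Y : Type*} [Fintype Y] (p q : Y → ℝ) : ℝ :=
  ∑ y ∈ Finset.univ.filter (fun y => 0 < p y), p y * Real.log (p y / q y)

/-- Gibbs' inequality on a finite type, with equality characterization. -/
lemma gibbs_aux {Y : Type*} [Fintype Y] (p q : Y → ℝ)
    (hp0 : ∀ y, 0 ≤ p y) (hp1 : ∑ y, p y = 1)
    (hq : ∀ y, 0 < q y) (hq1 : ∑ y, q y = 1) :
    (∑ y ∈ Finset.univ.filter (fun y => 0 < p y), p y * Real.log (q y / p y)) ≤ 0 ∧
    ((∑ y ∈ Finset.univ.filter (fun y => 0 < p y), p y * Real.log (q y / p y)) = 0 →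
      p = q) := by
  set S := Finset.univ.filter (fun y => 0 < p y) with hS
  have hmem : ∀ y ∈ S, 0 < p y := fun y hy => (Finset.mem_filter.mp hy).2
  have hpS : ∑ y ∈ S, p y = 1 := by
    rw [← hp1]
    apply Finset.sum_subset (Finset.subset_univ S)
    intro y _ hy
    have : ¬ 0 < p y := by simpa [hS] using hy
    linarith [hp0 y]
  have step : ∀ y ∈ S, p y * Real.log (q y / p y) ≤ q y - p y := by
    intro y hy
    have hpy := hmem y hy
    have hlog := Real.log_le_sub_one_of_pos (div_pos (hq y) hpy)
    have := mul_le_mul_of_nonneg_left hlog hpy.le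
    calc p y * Real.log (q y / p y) ≤ p y * (q y / p y - 1) := this
      _ = q y - p y := by field_simp
  have h1 : ∑ y ∈ S, p y * Real.log (q y / p y) ≤ ∑ y ∈ S, (q y - p y) :=
    Finset.sum_le_sum step
  have h2 : ∑ y ∈ S, (q y - p y) = (∑ y ∈ S, q y) - 1 := by
    rw [Finset.sum_sub_distrib, hpS]
  have h3 : ∑ y ∈ S, q y ≤ 1 := by
    rw [← hq1]
    exact Finset.sum_le_sum_of_subset_of_nonneg (Finset.subset_univ S)
      (fun y _ _ => (hq y).le)
  refine ⟨by linarith, ?_⟩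
  intro heq
  have hSq : ∑ y ∈ S, q y = 1 := by linarith
  have hall : ∀ y, y ∈ S := by
    by_contra hc
    push_neg at hc
    obtain ⟨y0, hy0⟩ := hc
    have hlt : ∑ y ∈ S, q y < ∑ y, q y := by
      apply Finset.sum_lt_sum_of_subset (Finset.subset_univ S)
        (Finset.mem_univ y0) hy0 (hq y0) (fun y _ _ => (hq y).le)
    rw [hq1, hSq] at hlt
    exact lt_irrefl _ hlt
  have hsumeq : ∑ y ∈ S, p y * Real.log (q y / p y) = ∑ y ∈ S, (q y - p y) := by
    linarith
  have hpt := (Finset.sum_eq_sum_iff_of_le step).mp hsumeq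
  funext y
  have hy := hall y
  have hpy := hmem y hy
  by_contra hne
  have hqp : q y / p y ≠ 1 := by
    intro h
    apply hne
    field_simp at h
    linarith
  have hstrict := Real.log_lt_sub_one_of_pos (div_pos (hq y) hpy) hqp
  have := mul_lt_mul_of_pos_left hstrict hpy
  have h4 : p y * (q y / p y - 1) = q y - p y := by field_simp
  have h5 := hpt y hy
  rw [h4] at this
  linarith

/-- Scale decoupling in emulated fine-tuning: the unique maximizer over probability
distributions `π` of `∑ π r − D_KL(π ‖ π̃_pt)`, where `r` is the implicit reward
`log(π_ft/π_pt)`, is `π̃_pt · π_ft / π_pt` normalized by `Z̃`. -/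
theorem scale_decoupling_unique_maximizer
    {Y : Type*} [Fintype Y] [Nonempty Y]
    (πpt πft πptNew : Y → ℝ)
    (hpt_pos : ∀ y, 0 < πpt y) (hpt_sum : ∑ y, πpt y = 1)
    (hft_pos : ∀ y, 0 < πft y) (hft_sum : ∑ y, πft y = 1)
    (hnew_pos : ∀ y, 0 < πptNew y) (hnew_sum : ∑ y, πptNew y = 1)
    (r : Y → ℝ) (hr : ∀ y, r y = Real.log (πft y / πpt y))
    (Ztil : ℝ) (hZtil : Ztil = ∑ y, πptNew y * πft y / πpt y)
    (πsol : Y → ℝ) (hsol : ∀ y, πsol y = πptNew y * πft y / πpt y / Ztil) :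
    ∀ π : Y → ℝ, (∀ y, 0 ≤ π y) → ∑ y, π y = 1 →
      (∑ y, π y * r y - KL π πptNew ≤ ∑ y, πsol y * r y - KL πsol πptNew) ∧
      (∑ y, π y * r y - KL π πptNew = ∑ y, πsol y * r y - KL πsol πptNew → π = πsol) := by
  have hZpos : 0 < Ztil := by
    rw [hZtil]
    apply Finset.sum_pos
    · intro y _
      have := hpt_pos y
      have := hft_pos y
      have := hnew_pos y
      positivity
    · exact Finset.univ_nonempty
  have hsol_pos : ∀ y, 0 < πsol y := by
    intro y
    rw [hsol y]
    have := hpt_pos y; have := hft_pos y; have := hnew_pos y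
    positivity
  have hsol_sum : ∑ y, πsol y = 1 := by
    simp only [hsol]
    rw [← Finset.sum_div, ← hZtil, div_self hZpos.ne']
  -- key identity
  have key : ∀ π : Y → ℝ, (∀ y, 0 ≤ π y) → ∑ y, π y = 1 →
      ∑ y, π y * r y - KL π πptNew =
        (∑ y ∈ Finset.univ.filter (fun y => 0 < π y), π y * Real.log (πsol y / π y))
          + Real.log Ztil := by
    intro π hπ0 hπ1
    set S := Finset.univ.filter (fun y => 0 < π y) with hS
    have hmem : ∀ y ∈ S, 0 < π y := fun y hy => (Finset.mem_filter.mp hy).2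
    have hπS : ∑ y ∈ S, π y = 1 := by
      rw [← hπ1]
      apply Finset.sum_subset (Finset.subset_univ S)
      intro y _ hy
      have : ¬ 0 < π y := by simpa [hS] using hy
      linarith [hπ0 y]
    have hsum1 : ∑ y, π y * r y = ∑ y ∈ S, π y * r y := by
      symm
      apply Finset.sum_subset (Finset.subset_univ S)
      intro y _ hy
      have : ¬ 0 < π y := by simpa [hS] using hy
      have : π y = 0 := le_antisymm (not_lt.mp this) (hπ0 y)
      simp [this]
    rw [hsum1, KL]
    rw [← hS, ← Finset.sum_sub_distrib]
    have hpt : ∀ y ∈ S,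
        π y * r y - π y * Real.log (π y / πptNew y)
          = π y * Real.log (πsol y / π y) + π y * Real.log Ztil := by
      intro y hy
      have hπy := hmem y hy
      have h1 := hpt_pos y
      have h2 := hft_pos y
      have h3 := hnew_pos y
      have h4 := hsol_pos y
      rw [hr y, Real.log_div h2.ne' h1.ne', Real.log_div hπy.ne' h3.ne',
        Real.log_div h4.ne' hπy.ne', hsol y,
        Real.log_div (by positivity : (πptNew y * πft y / πpt y : ℝ) ≠ 0) hZpos.ne',
        Real.log_div (by positivity : (πptNew y * πft y : ℝ) ≠ 0) h1.ne',
        Real.log_mul h3.ne' h2.ne']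
      ring
    rw [Finset.sum_congr rfl hpt, Finset.sum_add_distrib, ← Finset.sum_mul, hπS, one_mul]
  have hsolkey := key πsol (fun y => (hsol_pos y).le) hsol_sum
  have hsol_simp : (∑ y ∈ Finset.univ.filter (fun y => 0 < πsol y),
      πsol y * Real.log (πsol y / πsol y)) = 0 := by
    apply Finset.sum_eq_zero
    intro y _
    rw [div_self (hsol_pos y).ne']
    simp
  rw [hsol_simp, zero_add] at hsolkey
  intro π hπ0 hπ1
  have hkey := key π hπ0 hπ1
  obtain ⟨hle, heq⟩ := gibbs_aux π πsol hπ0 hπ1 hsol_pos hsol_sum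
  constructor
  · rw [hkey, hsolkey]; linarith
  · intro h
    rw [hkey, hsolkey] at h
    exact heq (by linarith)
end

section
/- Let Y be a finite nonempty set, let π_pt and π̃_pt be strictly positive probability distributions on Y, let r : Y → ℝ, and set Z = Σ_y π_pt(y)·exp(r(y)) and Z̃ = Σ_y π̃_pt(y)·exp(r(y)). Suppose C ≥ 0 satisfies max_y exp(r(y)) ≤ C·Σ_y π_pt(y)·exp(r(y)). Then Z̃/Z ≤ 1 + C·Σ_y |π̃_pt(y) − π_pt(y)|. -/
open BigOperators

/-- Partition-function ratio bound: if `max_y exp(r(y)) ≤ C · ∑ π_pt(y)·exp(r(y))`,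
then `Z̃/Z ≤ 1 + C·∑ |π̃_pt − π_pt|`. -/
theorem partition_ratio_bound
    {Y : Type*} [Fintype Y] [Nonempty Y]
    (πpt πptNew : Y → ℝ)
    (hpt_pos : ∀ y, 0 < πpt y) (hpt_sum : ∑ y, πpt y = 1)
    (hnew_pos : ∀ y, 0 < πptNew y) (hnew_sum : ∑ y, πptNew y = 1)
    (r : Y → ℝ)
    (Z Ztil : ℝ)
    (hZ : Z = ∑ y, πpt y * Real.exp (r y))
    (hZtil : Ztil = ∑ y, πptNew y * Real.exp (r y))
    (C : ℝ) (hC : 0 ≤ C)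
    (hmax : ∀ y, Real.exp (r y) ≤ C * ∑ y', πpt y' * Real.exp (r y')) :
    Ztil / Z ≤ 1 + C * ∑ y, |πptNew y - πpt y| := by
  have hZpos : 0 < Z := by
    rw [hZ]
    exact Finset.sum_pos (fun y _ => mul_pos (hpt_pos y) (Real.exp_pos _))
      Finset.univ_nonempty
  have key : Ztil ≤ Z + (C * ∑ y, |πptNew y - πpt y|) * Z := by
    have h1 : Ztil - Z = ∑ y, (πptNew y - πpt y) * Real.exp (r y) := by
      rw [hZ, hZtil, ← Finset.sum_sub_distrib]
      congr 1; ext y; ring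
    have h2 : Ztil - Z ≤ ∑ y, |πptNew y - πpt y| * (C * Z) := by
      rw [h1]
      apply Finset.sum_le_sum
      intro y _
      calc (πptNew y - πpt y) * Real.exp (r y)
          ≤ |πptNew y - πpt y| * Real.exp (r y) := by
            apply mul_le_mul_of_nonneg_right (le_abs_self _) (Real.exp_pos _).le
        _ ≤ |πptNew y - πpt y| * (C * Z) := by
            apply mul_le_mul_of_nonneg_left _ (abs_nonneg _)
            rw [hZ]; exact hmax y
    have h3 : ∑ y, |πptNew y - πpt y| * (C * Z) = (C * ∑ y, |πptNew y - πpt y|) * Z := by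
      rw [← Finset.sum_mul]; ring
    linarith [h2, h3 ▸ h2]
  rw [div_le_iff₀ hZpos]
  linarith
end
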